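/- arXiv:math/0301095 — 2 statements merged into one kernel-verified Lean document; each statement's English description precedes it below -/
import Mathlib

section
/- For non-degenerate binary quadratic forms P, Q of the same discriminant D, the quadratic form 2·det restricted to the rank-2 lattice Λ(P,Q) is non-degenerate; moreover Λ(P,Q) is indefinite if and only if both P and Q are indefinite. -/
/-- The binary quadratic form `[a,b,c]` identified with the even symmetric matrix
`[[2a, b], [b, 2c]]`. -/
def formMatrix (a b c : ℤ) : Matrix (Fin 2) (Fin 2) ℤ := !![2 * a, b; b, 2 * c]

/-- `Λ(P,Q) = { X ∈ M₂(ℤ) | Xᵀ P = Q Xᴬ }`, where `Xᴬ` is the adjugate. -/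
def LambdaSet (P Q : Matrix (Fin 2) (Fin 2) ℤ) : Set (Matrix (Fin 2) (Fin 2) ℤ) :=
  {X | X.transpose * P = Q * X.adjugate}

/-- The bilinear form on `M₂(ℤ)` associated to the quadratic form `2·det`. -/
def detBil (X Y : Matrix (Fin 2) (Fin 2) ℤ) : ℤ := (X + Y).det - X.det - Y.det

lemma mem_lambda_iff (a b c a' b' c' : ℤ) (X : Matrix (Fin 2) (Fin 2) ℤ) :
    X ∈ LambdaSet (formMatrix a b c) (formMatrix a' b' c') ↔
      (2*a*(X 0 0) + (b+b')*(X 1 0) - 2*a'*(X 1 1) = 0 ∧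
       (b-b')*(X 0 0) + 2*a'*(X 0 1) + 2*c*(X 1 0) = 0 ∧
       2*a*(X 0 1) + 2*c'*(X 1 0) + (b-b')*(X 1 1) = 0 ∧
       -(2*c')*(X 0 0) + (b+b')*(X 0 1) + 2*c*(X 1 1) = 0) := by
  rw [LambdaSet, Set.mem_setOf_eq, ← Matrix.ext_iff]
  simp [Fin.forall_fin_two, Matrix.mul_apply, Fin.sum_univ_two, Matrix.transpose_apply,
    Matrix.adjugate_fin_two, formMatrix]
  constructor
  · rintro ⟨⟨h1, h2⟩, h3, h4⟩
    refine ⟨by linarith, by linarith, by linarith, by linarith⟩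
  · rintro ⟨h1, h2, h3, h4⟩
    refine ⟨⟨by linarith, by linarith⟩, by linarith, by linarith⟩

lemma detBil_eq (X : Matrix (Fin 2) (Fin 2) ℤ) (p q r s : ℤ) :
    detBil X !![p, q; r, s] = X 0 0 * s + X 1 1 * p - X 0 1 * r - X 1 0 * q := by
  simp [detBil, Matrix.det_fin_two]
  ring

lemma memFa (a b c a' b' c' s t : ℤ) (hsame : b^2-4*a*c = b'^2-4*a'*c') :
    !![2*a'*s - (b+b')*t, (b'-b)*s - 2*c'*t; 2*a*t, 2*a*s] ∈
      LambdaSet (formMatrix a b c) (formMatrix a' b' c') := by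
  rw [mem_lambda_iff]
  norm_num
  refine ⟨by ring, by linear_combination (-t)*hsame, by ring, by linear_combination (-s)*hsame⟩

lemma memFc (a b c a' b' c' s t : ℤ) (hsame : b^2-4*a*c = b'^2-4*a'*c') :
    !![2*c*t, 2*c*s; (b'-b)*t - 2*a'*s, 2*c'*t - (b+b')*s] ∈
      LambdaSet (formMatrix a b c) (formMatrix a' b' c') := by
  rw [mem_lambda_iff]
  norm_num
  refine ⟨by linear_combination (-t)*hsame, by ring, by linear_combination (-s)*hsame, by ring⟩

lemma memFA (a b c a' b' c' s t : ℤ) (hsame : b^2-4*a*c = b'^2-4*a'*c') :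
    !![2*a'*t, (b'-b)*t - 2*c*s; 2*a'*s, 2*a*t + (b+b')*s] ∈
      LambdaSet (formMatrix a b c) (formMatrix a' b' c') := by
  rw [mem_lambda_iff]
  norm_num
  refine ⟨by ring, by ring, by linear_combination s*hsame, by linear_combination (-t)*hsame⟩

lemma memFC (a b c a' b' c' s t : ℤ) (hsame : b^2-4*a*c = b'^2-4*a'*c') :
    !![(b+b')*t + 2*c*s, 2*c'*t; -(2*a)*t + (b'-b)*s, 2*c'*s] ∈
      LambdaSet (formMatrix a b c) (formMatrix a' b' c') := by
  rw [mem_lambda_iff]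
  norm_num
  refine ⟨by linear_combination (-s)*hsame, by linear_combination t*hsame, by ring, by ring⟩

lemma L1 (p q r : ℤ) (h : 0 < q^2 - 4*p*r) :
    ∃ s t u v : ℤ, (p*s^2+q*s*t+r*t^2) * (p*u^2+q*u*v+r*v^2) < 0 := by
  rcases eq_or_ne p 0 with hp | hp
  · rcases eq_or_ne r 0 with hr | hr
    · subst hp; subst hr
      have hq : 0 < q^2 := by nlinarith
      exact ⟨1, 1, 1, -1, by nlinarith⟩
    · subst hp
      have hq2 : 0 < q^2 := by nlinarith
      have hr2 : 0 < r^2 := by positivity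
      exact ⟨0, 1, -2*r, q, by nlinarith [mul_pos hq2 hr2]⟩
  · have hp2 : 0 < p^2 := by positivity
    exact ⟨1, 0, q, -2*p, by nlinarith [mul_pos hp2 h]⟩


lemma nonneg_of_eq {v S D t : ℤ} (hD : D < 0) (h : v = S^2 - D*t^2) : 0 ≤ v := by
  have h1 : 0 ≤ -D * t^2 := mul_nonneg (by linarith) (sq_nonneg t)
  nlinarith [sq_nonneg S]

lemma sign_le {k d : ℤ} (h : 0 ≤ 4*k*d) (hd : 2*d < 0) : k ≤ 0 := by nlinarith

lemma sign_ge {k d : ℤ} (h : 0 ≤ 4*k*d) (hd : 2*d > 0) : 0 ≤ k := by nlinarith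

lemma detFa (a b c a' b' c' s t : ℤ) :
    (!![2*a'*s - (b+b')*t, (b'-b)*s - 2*c'*t; 2*a*t, 2*a*s] : Matrix (Fin 2) (Fin 2) ℤ).det
      = 4*a*(a'*s^2 + (-b')*s*t + c'*t^2) := by
  rw [Matrix.det_fin_two_of]; ring

lemma detFc (a b c a' b' c' s t : ℤ) :
    (!![2*c*t, 2*c*s; (b'-b)*t - 2*a'*s, 2*c'*t - (b+b')*s] : Matrix (Fin 2) (Fin 2) ℤ).det
      = 4*c*(a'*s^2 + (-b')*s*t + c'*t^2) := by
  rw [Matrix.det_fin_two_of]; ring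

lemma detFA (a b c a' b' c' s t : ℤ) :
    (!![2*a'*t, (b'-b)*t - 2*c*s; 2*a'*s, 2*a*t + (b+b')*s] : Matrix (Fin 2) (Fin 2) ℤ).det
      = 4*a'*(c*s^2 + b*s*t + a*t^2) := by
  rw [Matrix.det_fin_two_of]; ring

lemma detFC (a b c a' b' c' s t : ℤ) :
    (!![(b+b')*t + 2*c*s, 2*c'*t; -(2*a)*t + (b'-b)*s, 2*c'*s] : Matrix (Fin 2) (Fin 2) ℤ).det
      = 4*c'*(c*s^2 + b*s*t + a*t^2) := by
  rw [Matrix.det_fin_two_of]; ring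

lemma both_signs {P Q : Matrix (Fin 2) (Fin 2) ℤ} (F : ℤ → ℤ → Matrix (Fin 2) (Fin 2) ℤ)
    (k p q r : ℤ) (hmem : ∀ s t, F s t ∈ LambdaSet P Q) (hk : k ≠ 0)
    (hdet : ∀ s t, (F s t).det = 4*k*(p*s^2+q*s*t+r*t^2)) (hD : 0 < q^2 - 4*p*r) :
    (∃ X ∈ LambdaSet P Q, 2*X.det > 0) ∧ (∃ Y ∈ LambdaSet P Q, 2*Y.det < 0) := by
  obtain ⟨s, t, u, v, hprod⟩ := L1 p q r hD
  have hk2 : 0 < k^2 := by positivity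
  have h : (2*(F s t).det) * (2*(F u v).det) < 0 := by
    rw [hdet, hdet]
    nlinarith [mul_neg_of_pos_of_neg hk2 hprod]
  rcases mul_neg_iff.mp h with ⟨h1, h2⟩ | ⟨h1, h2⟩
  · exact ⟨⟨F s t, hmem s t, h1⟩, ⟨F u v, hmem u v, h2⟩⟩
  · exact ⟨⟨F u v, hmem u v, h2⟩, ⟨F s t, hmem s t, h1⟩⟩

set_option maxHeartbeats 2000000 in
/-- For non-degenerate binary quadratic forms `P`, `Q` of the same discriminant, the
restriction of the form `2·det` to `Λ(P,Q)` is non-degenerate, and `Λ(P,Q)` is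
indefinite iff both `P` and `Q` are indefinite. -/
theorem stmt11 (a b c a' b' c' : ℤ) (hP : b ^ 2 - 4 * a * c ≠ 0)
    (hQ : b' ^ 2 - 4 * a' * c' ≠ 0)
    (hsame : b ^ 2 - 4 * a * c = b' ^ 2 - 4 * a' * c') :
    (∀ X ∈ LambdaSet (formMatrix a b c) (formMatrix a' b' c'),
      (∀ Y ∈ LambdaSet (formMatrix a b c) (formMatrix a' b' c'), detBil X Y = 0) → X = 0) ∧
    (((∃ X ∈ LambdaSet (formMatrix a b c) (formMatrix a' b' c'), 2 * X.det > 0) ∧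
      (∃ Y ∈ LambdaSet (formMatrix a b c) (formMatrix a' b' c'), 2 * Y.det < 0)) ↔
      (b ^ 2 - 4 * a * c > 0 ∧ b' ^ 2 - 4 * a' * c' > 0)) := by
  constructor
  · -- nondegeneracy
    intro X hX hrad
    obtain ⟨e1, e2, e3, e4⟩ := (mem_lambda_iff a b c a' b' c' X).mp hX
    have m1 := hrad _ (memFa a b c a' b' c' 0 1 hsame)
    have m2 := hrad _ (memFa a b c a' b' c' 1 0 hsame)
    have m4 := hrad _ (memFA a b c a' b' c' 1 0 hsame)
    have m5 := hrad _ (memFc a b c a' b' c' 0 1 hsame)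
    rw [detBil_eq] at m1 m2 m4 m5
    have h1 : 2*b'*(X 1 1) - 4*c'*(X 1 0) = 0 := by linear_combination -m1 - e3
    have h2 : 4*a'*(X 1 1) - 2*b'*(X 1 0) = 0 := by linear_combination m2 - e1
    have hDw : (2*(b'^2 - 4*a'*c'))*(X 1 1) = 0 := by linear_combination b'*h1 - 2*c'*h2
    have hDz : (2*(b'^2 - 4*a'*c'))*(X 1 0) = 0 := by linear_combination -b'*h2 + 2*a'*h1
    have hQ2 : (2:ℤ)*(b'^2-4*a'*c') ≠ 0 := mul_ne_zero two_ne_zero hQ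
    have w0 : X 1 1 = 0 := (mul_eq_zero.mp hDw).resolve_left hQ2
    have z0 : X 1 0 = 0 := (mul_eq_zero.mp hDz).resolve_left hQ2
    have h3 : 2*b*(X 0 0) + 4*c*(X 1 0) = 0 := by linear_combination m4 + e2
    have h4 : 2*b*(X 0 1) + 4*c*(X 1 1) = 0 := by linear_combination m5 + e4
    rw [z0, w0] at e1 e3
    rw [z0] at h3
    rw [w0] at h4
    have hbx : b*(X 0 0) = 0 := by linarith
    have hax : a*(X 0 0) = 0 := by linarith
    have hby : b*(X 0 1) = 0 := by linarith
    have hay : a*(X 0 1) = 0 := by linarith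
    have hab : b ≠ 0 ∨ a ≠ 0 := by
      rcases eq_or_ne b 0 with hb | hb
      · right; intro h0; exact hP (by rw [hb, h0]; ring)
      · left; exact hb
    have x0 : X 0 0 = 0 := by
      rcases hab with hb | ha
      · exact (mul_eq_zero.mp hbx).resolve_left hb
      · exact (mul_eq_zero.mp hax).resolve_left ha
    have y0 : X 0 1 = 0 := by
      rcases hab with hb | ha
      · exact (mul_eq_zero.mp hby).resolve_left hb
      · exact (mul_eq_zero.mp hay).resolve_left ha
    ext i j
    simp only [Matrix.zero_apply]
    fin_cases i <;> fin_cases j <;> assumption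
  · constructor
    · -- indefinite → both discriminants positive
      rintro ⟨⟨X, hX, hXpos⟩, ⟨Y, hY, hYneg⟩⟩
      suffices hD : b^2 - 4*a*c > 0 by exact ⟨hD, hsame ▸ hD⟩
      by_contra hD
      have hDlt : b^2 - 4*a*c < 0 := lt_of_le_of_ne (not_lt.mp hD) hP
      have hDlt' : b'^2 - 4*a'*c' < 0 := hsame ▸ hDlt
      obtain ⟨ex1, ex2, ex3, ex4⟩ := (mem_lambda_iff a b c a' b' c' X).mp hX
      obtain ⟨ey1, ey2, ey3, ey4⟩ := (mem_lambda_iff a b c a' b' c' Y).mp hY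
      rw [Matrix.det_fin_two] at hXpos hYneg
      have keyaA_X : 4*(a*a')*(X 0 0 * X 1 1 - X 0 1 * X 1 0) =
          (2*a*(X 0 0)+b*(X 1 0))^2 - (b^2-4*a*c)*(X 1 0)^2 := by
        linear_combination (-2*a*(X 0 0))*ex1 + (-2*a*(X 1 0))*ex2
      have keycA_X : 4*(c*a')*(X 0 0 * X 1 1 - X 0 1 * X 1 0) =
          (b*(X 0 0)+2*c*(X 1 0))^2 - (b^2-4*a*c)*(X 0 0)^2 := by
        linear_combination (-2*c*(X 0 0))*ex1 + (-2*c*(X 1 0))*ex2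
      have keyaC_X : 4*(a*c')*(X 0 0 * X 1 1 - X 0 1 * X 1 0) =
          (2*a*(X 0 1)+b*(X 1 1))^2 - (b^2-4*a*c)*(X 1 1)^2 := by
        linear_combination (-2*a*(X 0 1))*ex3 + (-2*a*(X 1 1))*ex4
      have keycC_X : 4*(c*c')*(X 0 0 * X 1 1 - X 0 1 * X 1 0) =
          (b*(X 0 1)+2*c*(X 1 1))^2 - (b^2-4*a*c)*(X 0 1)^2 := by
        linear_combination (-2*c*(X 0 1))*ex3 + (-2*c*(X 1 1))*ex4
      have keyaA_Y : 4*(a*a')*(Y 0 0 * Y 1 1 - Y 0 1 * Y 1 0) =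
          (2*a*(Y 0 0)+b*(Y 1 0))^2 - (b^2-4*a*c)*(Y 1 0)^2 := by
        linear_combination (-2*a*(Y 0 0))*ey1 + (-2*a*(Y 1 0))*ey2
      have keycA_Y : 4*(c*a')*(Y 0 0 * Y 1 1 - Y 0 1 * Y 1 0) =
          (b*(Y 0 0)+2*c*(Y 1 0))^2 - (b^2-4*a*c)*(Y 0 0)^2 := by
        linear_combination (-2*c*(Y 0 0))*ey1 + (-2*c*(Y 1 0))*ey2
      have keyaC_Y : 4*(a*c')*(Y 0 0 * Y 1 1 - Y 0 1 * Y 1 0) =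
          (2*a*(Y 0 1)+b*(Y 1 1))^2 - (b^2-4*a*c)*(Y 1 1)^2 := by
        linear_combination (-2*a*(Y 0 1))*ey3 + (-2*a*(Y 1 1))*ey4
      have keycC_Y : 4*(c*c')*(Y 0 0 * Y 1 1 - Y 0 1 * Y 1 0) =
          (b*(Y 0 1)+2*c*(Y 1 1))^2 - (b^2-4*a*c)*(Y 0 1)^2 := by
        linear_combination (-2*c*(Y 0 1))*ey3 + (-2*c*(Y 1 1))*ey4
      have nXaA := nonneg_of_eq hDlt keyaA_X
      have nYaA := nonneg_of_eq hDlt keyaA_Y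
      have nXcA := nonneg_of_eq hDlt keycA_X
      have nYcA := nonneg_of_eq hDlt keycA_Y
      have nXaC := nonneg_of_eq hDlt keyaC_X
      have nYaC := nonneg_of_eq hDlt keyaC_Y
      have nXcC := nonneg_of_eq hDlt keycC_X
      have nYcC := nonneg_of_eq hDlt keycC_Y
      have kaA : a*a' = 0 := le_antisymm (sign_le nYaA hYneg) (sign_ge nXaA hXpos)
      have kcA : c*a' = 0 := le_antisymm (sign_le nYcA hYneg) (sign_ge nXcA hXpos)
      have kaC : a*c' = 0 := le_antisymm (sign_le nYaC hYneg) (sign_ge nXaC hXpos)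
      have kcC : c*c' = 0 := le_antisymm (sign_le nYcC hYneg) (sign_ge nXcC hXpos)
      clear keyaA_X keycA_X keyaC_X keycC_X keyaA_Y keycA_Y keyaC_Y keycC_Y
      clear nXaA nYaA nXcA nYcA nXaC nYaC nXcC nYcC ex1 ex2 ex3 ex4 ey1 ey2 ey3 ey4
      clear hXpos hYneg hX hY X Y
      have hac : 0 < a*c := by nlinarith [sq_nonneg b]
      have hAC : 0 < a'*c' := by nlinarith [sq_nonneg b']
      have hprod : (a*c)*(a'*c') = 0 := by linear_combination (c*c')*kaA
      nlinarith [mul_pos hac hAC]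
    · -- both positive → indefinite
      rintro ⟨hD1, hD2⟩
      by_cases ha : a = 0
      · by_cases hc : c = 0
        · by_cases hA : a' = 0
          · by_cases hC : c' = 0
            · -- degenerate: a = c = a' = c' = 0
              subst ha; subst hc; subst hA; subst hC
              have hbb : (b' - b)*(b' + b) = 0 := by linear_combination -hsame
              rcases mul_eq_zero.mp hbb with h | h
              · have hb' : b' = b := by linarith
                subst hb'
                refine ⟨⟨!![1,0;0,1], ?_, ?_⟩, ⟨!![1,0;0,-1], ?_, ?_⟩⟩
                · rw [mem_lambda_iff]; norm_num
                · norm_num [Matrix.det_fin_two_of]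
                · rw [mem_lambda_iff]; norm_num
                · norm_num [Matrix.det_fin_two_of]
              · have hb' : b' = -b := by linarith
                subst hb'
                refine ⟨⟨!![0,1;-1,0], ?_, ?_⟩, ⟨!![0,1;1,0], ?_, ?_⟩⟩
                · rw [mem_lambda_iff]; norm_num
                · norm_num [Matrix.det_fin_two_of]
                · rw [mem_lambda_iff]; norm_num
                · norm_num [Matrix.det_fin_two_of]
            · -- c' ≠ 0, chart FC
              exact both_signs _ c' c b a
                (fun s t => memFC a b c a' b' c' s t hsame) hC
                (fun s t => detFC a b c a' b' c' s t)
                (by nlinarith)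
          · -- a' ≠ 0, chart FA
            exact both_signs _ a' c b a
              (fun s t => memFA a b c a' b' c' s t hsame) hA
              (fun s t => detFA a b c a' b' c' s t)
              (by nlinarith)
        · -- c ≠ 0, chart Fc
          exact both_signs _ c a' (-b') c'
            (fun s t => memFc a b c a' b' c' s t hsame) hc
            (fun s t => detFc a b c a' b' c' s t)
            (by nlinarith)
      · -- a ≠ 0, chart Fa
        exact both_signs _ a a' (-b') c'
          (fun s t => memFa a b c a' b' c' s t hsame) ha
          (fun s t => detFa a b c a' b' c' s t)
          (by nlinarith)
end

section
/- Let P = [a,b,c], Q = [a',b',c'] be binary forms of discriminant D with contents δ = gcd(a,b,c), δ' = gcd(a',b',c'), and λ = gcd(δ,δ'). Then the rank-2 lattice Λ(P,Q) has discriminant D/λ². -/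
/-- The content `gcd(a,b,c)` of the binary form `[a,b,c]`. -/
def content (a b c : ℤ) : ℕ := Int.gcd (Int.gcd a b) c


/-! Since the discriminants agree, `b ≡ b' (mod 2)`; write `b = m - k`, `b' = m + k`, and divide
all six coefficients by `λ`, which does not change `Λ`. The four linear equations cutting out `Λ`
then have rank 2, so the Plücker vector `v ∧ w` of any basis `v, w` of `Λ` is proportional to
`n = (-c, a', m, k, c', -a)`; the entries of `n` are coprime because the contents are, so
`v ∧ w = t • n` with `t ∈ ℤ`. As `Λ` is saturated in `M₂(ℤ)` (its defining equation is
homogeneous), no prime divides every coordinate of `v ∧ w`, hence `t = ±1`. Finally the Gram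
determinant of `2·det` on `v, w` is a quadratic form in `v ∧ w`, whose value at `n` is the
discriminant. -/

open Matrix

section Adjugate

variable {R : Type*} [CommRing R]

theorem Matrix.adjugate_add_fin_two (X Y : Matrix (Fin 2) (Fin 2) R) :
    (X + Y).adjugate = X.adjugate + Y.adjugate := by
  ext i j
  fin_cases i <;> fin_cases j <;>
    simp only [Fin.zero_eta, Fin.mk_one, Fin.isValue, adjugate_fin_two, Matrix.add_apply, of_apply,
      cons_val', cons_val_zero, cons_val_one, cons_val_fin_one] <;> ring

theorem Matrix.adjugate_smul_fin_two (r : R) (X : Matrix (Fin 2) (Fin 2) R) :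
    (r • X).adjugate = r • X.adjugate := by
  simp [adjugate_smul]

end Adjugate

section LambdaSet

theorem mem_lambdaSet_iff {P Q X : Matrix (Fin 2) (Fin 2) ℤ} :
    X ∈ LambdaSet P Q ↔ Xᵀ * P = Q * X.adjugate :=
  Iff.rfl

def lambdaSubmodule (P Q : Matrix (Fin 2) (Fin 2) ℤ) :
    Submodule ℤ (Matrix (Fin 2) (Fin 2) ℤ) where
  carrier := LambdaSet P Q
  add_mem' {X Y} hX hY := by
    simp only [mem_lambdaSet_iff] at *
    rw [transpose_add, add_mul, hX, hY, adjugate_add_fin_two, mul_add]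
  zero_mem' := by simp [LambdaSet]
  smul_mem' r X hX := by
    simp only [mem_lambdaSet_iff] at *
    rw [transpose_smul, smul_mul, hX, adjugate_smul_fin_two, Matrix.mul_smul]

theorem coe_span_lambdaSet (P Q : Matrix (Fin 2) (Fin 2) ℤ) :
    (Submodule.span ℤ (LambdaSet P Q) : Set (Matrix (Fin 2) (Fin 2) ℤ)) = LambdaSet P Q :=
  congrArg SetLike.coe (Submodule.span_eq (lambdaSubmodule P Q))

theorem smul_mem_lambdaSet_iff {r : ℤ} (hr : r ≠ 0) {P Q X : Matrix (Fin 2) (Fin 2) ℤ} :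
    r • X ∈ LambdaSet P Q ↔ X ∈ LambdaSet P Q := by
  simp only [mem_lambdaSet_iff, transpose_smul, smul_mul, adjugate_smul_fin_two, Matrix.mul_smul]
  exact (smul_right_injective _ hr).eq_iff

theorem lambdaSet_smul {r : ℤ} (hr : r ≠ 0) (P Q : Matrix (Fin 2) (Fin 2) ℤ) :
    LambdaSet (r • P) (r • Q) = LambdaSet P Q := by
  ext X
  simp only [mem_lambdaSet_iff, Matrix.mul_smul, smul_mul]
  exact (smul_right_injective _ hr).eq_iff

theorem linear_relations_of_mem_lambdaSet {a c a' c' m k : ℤ} {X : Matrix (Fin 2) (Fin 2) ℤ}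
    (hX : X ∈ LambdaSet (formMatrix a (m - k) c) (formMatrix a' (m + k) c')) :
    a * X 0 0 + m * X 1 0 - a' * X 1 1 = 0 ∧ -k * X 0 0 + a' * X 0 1 + c * X 1 0 = 0 ∧
      a * X 0 1 + c' * X 1 0 - k * X 1 1 = 0 ∧ -c' * X 0 0 + m * X 0 1 + c * X 1 1 = 0 := by
  have h (i j : Fin 2) := congrFun (congrFun (mem_lambdaSet_iff.mp hX) i) j
  have h00 := h 0 0; have h01 := h 0 1; have h10 := h 1 0; have h11 := h 1 1
  simp only [formMatrix, Matrix.mul_apply, transpose_apply, of_apply, cons_val', cons_val_zero,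
    cons_val_fin_one, Fin.sum_univ_two, cons_val_one, adjugate_fin_two, mul_neg] at h00 h01 h10 h11
  refine ⟨?_, ?_, ?_, ?_⟩ <;> linarith

end LambdaSet

section Forms

theorem formMatrix_mul (l a b c : ℤ) :
    formMatrix (l * a) (l * b) (l * c) = l • formMatrix a b c := by
  ext i j
  fin_cases i <;> fin_cases j <;>
    simp only [formMatrix, Fin.zero_eta, Fin.mk_one, Fin.isValue, of_apply, cons_val', cons_val_zero,
      cons_val_one, cons_val_fin_one, Matrix.smul_apply, smul_eq_mul] <;> ring

theorem content_mul (l a b c : ℤ) :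
    content (l * a) (l * b) (l * c) = l.natAbs * content a b c := by
  simp [content, Int.gcd_eq_natAbs, Int.natAbs_mul, Nat.gcd_mul_left, Int.natAbs_abs]

theorem exists_eq_mul_of_dvd_content {d : ℕ} {a b c : ℤ} (h : d ∣ content a b c) :
    ∃ A B C, a = d * A ∧ b = d * B ∧ c = d * C := by
  have hd : (d : ℤ) ∣ Int.gcd (Int.gcd a b) c := Int.natCast_dvd_natCast.mpr h
  obtain ⟨A, rfl⟩ := hd.trans ((Int.gcd_dvd_left _ _).trans (Int.gcd_dvd_left _ _))
  obtain ⟨B, rfl⟩ := hd.trans ((Int.gcd_dvd_left _ _).trans (Int.gcd_dvd_right _ _))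
  obtain ⟨C, rfl⟩ := hd.trans (Int.gcd_dvd_right _ _)
  exact ⟨A, B, C, rfl, rfl, rfl⟩

theorem exists_eq_sub_add_of_discrim_eq {A B C A' B' C' : ℤ}
    (h : B ^ 2 - 4 * A * C = B' ^ 2 - 4 * A' * C') : ∃ m k, B = m - k ∧ B' = m + k := by
  have hsq : Even (B' ^ 2 - B ^ 2) := ⟨2 * (A' * C' - A * C), by linear_combination -h⟩
  simp only [Int.even_sub, Int.even_pow, ne_eq, OfNat.ofNat_ne_zero, not_false_eq_true,
    and_true] at hsq
  obtain ⟨r, hr⟩ := Int.even_sub.mpr hsq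
  exact ⟨B + r, r, by ring, by linear_combination hr⟩

theorem Int.natCast_gcd_mem {I : Ideal ℤ} {x y : ℤ} (hx : x ∈ I) (hy : y ∈ I) :
    (Int.gcd x y : ℤ) ∈ I := by
  rw [Int.gcd_eq_gcd_ab]
  exact I.add_mem (I.mul_mem_right _ hx) (I.mul_mem_right _ hy)

theorem exists_sum_mul_eq_one_of_coprime_content {a c a' c' m k : ℤ}
    (h : Nat.gcd (content a (m - k) c) (content a' (m + k) c') = 1) :
    ∃ e : Fin 6 → ℤ, ∑ i, e i * ![-c, a', m, k, c', -a] i = 1 := by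
  rw [← Ideal.mem_span_range_iff_exists_fun]
  set I := Ideal.span (Set.range ![-c, a', m, k, c', -a])
  have mem (i : Fin 6) : ![-c, a', m, k, c', -a] i ∈ I := Ideal.subset_span ⟨i, rfl⟩
  have content_mem {x y z : ℤ} (hx : x ∈ I) (hy : y ∈ I) (hz : z ∈ I) :
      (content x y z : ℤ) ∈ I :=
    Int.natCast_gcd_mem (Int.natCast_gcd_mem hx hy) hz
  have ha : a ∈ I := by simpa using I.neg_mem (mem 5)
  have hc : c ∈ I := by simpa using I.neg_mem (mem 0)
  have hδ := content_mem ha (I.sub_mem (mem 2) (mem 3)) hc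
  have hδ' := content_mem (mem 1) (I.add_mem (mem 2) (mem 3)) (mem 4)
  simpa [Int.gcd_natCast_natCast, h] using Int.natCast_gcd_mem hδ hδ'

end Forms

section Plucker

theorem forall_dvd_or_exists_dvd_sub_mul_of_dvd_minors {R ι : Type*} [CommRing R] [IsDomain R]
    [IsPrincipalIdealRing R] {ρ : R} (hρ : Prime ρ) {v w : ι → R}
    (h : ∀ i j, ρ ∣ v i * w j - v j * w i) :
    (∀ i, ρ ∣ v i) ∨ ∃ β, ∀ i, ρ ∣ w i - β * v i := by
  refine or_iff_not_imp_left.mpr fun hv => ?_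
  obtain ⟨l, hl⟩ := not_forall.mp hv
  obtain ⟨κ, μ, hκμ⟩ := (hρ.coprime_iff_not_dvd).mpr hl
  refine ⟨μ * w l, fun i => ?_⟩
  have : w i - μ * w l * v i = ρ * (κ * w i) + μ * (v l * w i - v i * w l) := by
    linear_combination (-w i) * hκμ
  rw [this]
  exact dvd_add (dvd_mul_right _ _) ((h l i).mul_left _)

theorem Module.Basis.add_smul_ne_smul {R N ι : Type*} [CommRing R] [AddCommGroup N]
    [Module R N] (b : Module.Basis ι R N) {i j : ι} (hij : i ≠ j) (β : R) {ρ : R}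
    (hρ : ¬IsUnit ρ) (z : N) : b i + β • b j ≠ ρ • z := by
  intro h
  have := congrArg (fun x => b.repr x i) h
  simp only [map_add, repr_self, map_smul, Finsupp.smul_single, smul_eq_mul, mul_one,
    Finsupp.coe_add, Pi.add_apply, Finsupp.single_eq_same, Finsupp.single_eq_of_ne' hij.symm,
    add_zero, Finsupp.coe_smul, Pi.smul_apply] at this
  exact hρ (.of_mul_eq_one _ this.symm)

/-- The coordinates of `v ∧ w`, for `v, w ∈ M₂(ℤ) ≅ ℤ⁴` with the entries ordered
`00, 01, 10, 11`. -/
def plucker (v w : Matrix (Fin 2) (Fin 2) ℤ) : Fin 6 → ℤ :=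
  ![v 0 0 * w 0 1 - v 0 1 * w 0 0, v 0 0 * w 1 0 - v 1 0 * w 0 0,
    v 0 0 * w 1 1 - v 1 1 * w 0 0, v 0 1 * w 1 0 - v 1 0 * w 0 1,
    v 0 1 * w 1 1 - v 1 1 * w 0 1, v 1 0 * w 1 1 - v 1 1 * w 1 0]

def pluckerForm (p : Fin 6 → ℤ) : ℤ := p 2 ^ 2 + p 3 ^ 2 - 2 * p 0 * p 5 - 2 * p 1 * p 4

theorem neg_det_gram_detBil_eq_pluckerForm (f : Fin 2 → Matrix (Fin 2) (Fin 2) ℤ) :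
    -(Matrix.of fun i j => detBil (f i) (f j)).det = pluckerForm (plucker (f 0) (f 1)) := by
  simp only [detBil, det_fin_two, Fin.isValue, Matrix.add_apply, of_apply, pluckerForm, plucker,
    cons_val, cons_val_zero, cons_val_one]
  ring

theorem forall_dvd_or_exists_dvd_sub_mul_of_dvd_plucker {ρ : ℤ} (hρ : Prime ρ)
    {v w : Matrix (Fin 2) (Fin 2) ℤ} (h : ∀ i, ρ ∣ plucker v w i) :
    (∀ i j, ρ ∣ v i j) ∨ ∃ β, ∀ i j, ρ ∣ w i j - β * v i j := by
  have hminors (i j : Fin 2 × Fin 2) :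
      ρ ∣ v i.1 i.2 * w j.1 j.2 - v j.1 j.2 * w i.1 i.2 := by
    simp only [Fin.forall_fin_succ, plucker] at h
    rcases i with ⟨i₁, i₂⟩; rcases j with ⟨j₁, j₂⟩
    fin_cases i₁ <;> fin_cases i₂ <;> fin_cases j₁ <;> fin_cases j₂ <;>
      simp only [Fin.zero_eta, Fin.isValue, Fin.mk_one, sub_self, dvd_zero] <;>
      first | tauto | (rw [dvd_sub_comm]; tauto)
  simpa [Prod.forall] using forall_dvd_or_exists_dvd_sub_mul_of_dvd_minors hρ hminors

theorem not_forall_prime_dvd_plucker {M : Submodule ℤ (Matrix (Fin 2) (Fin 2) ℤ)}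
    (hM : ∀ (r : ℤ) X, r ≠ 0 → r • X ∈ M → X ∈ M) (b : Module.Basis (Fin 2) ℤ M)
    {ρ : ℤ} (hρ : Prime ρ) : ¬ ∀ i, ρ ∣ plucker (b 0) (b 1) i := by
  have key {i j : Fin 2} (hij : i ≠ j) (β : ℤ)
      (hdvd : ∀ r s, ρ ∣ (b i : Matrix (Fin 2) (Fin 2) ℤ) r s + β * (b j : Matrix _ _ ℤ) r s) :
      False := by
    choose Z hZ using hdvd
    have hZ' : ((b i + β • b j : M) : Matrix (Fin 2) (Fin 2) ℤ) = ρ • Matrix.of Z := by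
      ext r s
      simp only [Submodule.coe_add, Submodule.coe_smul, Matrix.add_apply, Matrix.smul_apply,
        smul_eq_mul, hZ, of_apply]
    have hZM : Matrix.of Z ∈ M := hM ρ _ hρ.ne_zero (hZ' ▸ (b i + β • b j).prop)
    exact b.add_smul_ne_smul hij β hρ.not_isUnit ⟨_, hZM⟩ (Subtype.ext hZ')
  intro h
  rcases forall_dvd_or_exists_dvd_sub_mul_of_dvd_plucker hρ h with hv | ⟨β, hw⟩
  · exact key zero_ne_one 0 (by simpa using hv)
  · exact key one_ne_zero (-β) (by simpa [sub_eq_add_neg] using hw)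

theorem eq_sum_mul_smul_of_smul_eq_smul {R ι : Type*} [CommRing R] [IsDomain R] [Fintype ι]
    {n p e : ι → R} (he : ∑ i, e i * n i = 1) {D σ : R} (hD : D ≠ 0) (h : D • p = σ • n) :
    p = (∑ i, e i * p i) • n := by
  have hσ : σ = D * ∑ i, e i * p i := by
    have := congrArg (fun q => ∑ i, e i * q i) h
    simp only [Pi.smul_apply, smul_eq_mul, mul_left_comm _ D, mul_left_comm _ σ,
      ← Finset.mul_sum, he, mul_one] at this
    exact this.symm
  ext i
  apply mul_left_cancel₀ hD
  have := congrFun h i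
  simp only [Pi.smul_apply, smul_eq_mul] at this ⊢
  rw [this, hσ, mul_assoc]

theorem exists_smul_plucker_eq_smul {a c a' c' m k : ℤ} (hR : a * c + m * k = a' * c')
    {v w : Matrix (Fin 2) (Fin 2) ℤ}
    (hv : v ∈ LambdaSet (formMatrix a (m - k) c) (formMatrix a' (m + k) c'))
    (hw : w ∈ LambdaSet (formMatrix a (m - k) c) (formMatrix a' (m + k) c')) :
    ∃ σ : ℤ, ((m - k) ^ 2 - 4 * a * c) • plucker v w = σ • ![-c, a', m, k, c', -a] := by
  obtain ⟨hv1, hv2, hv3, hv4⟩ := linear_relations_of_mem_lambdaSet hv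
  obtain ⟨hw1, hw2, hw3, hw4⟩ := linear_relations_of_mem_lambdaSet hw
  -- half the polar form of `pluckerForm` at `plucker v w` and `![-c, a', m, k, c', -a]`
  refine ⟨a * plucker v w 0 - c' * plucker v w 1 + m * plucker v w 2 + k * plucker v w 3
    - a' * plucker v w 4 + c * plucker v w 5, ?_⟩
  ext i
  fin_cases i <;>
    simp only [plucker, Fin.isValue, Fin.zero_eta, Fin.mk_one, Fin.reduceFinMk, Pi.smul_apply,
      smul_eq_mul, cons_val, cons_val_zero, cons_val_one]
  -- each `w j * hvᵢ - v j * hwᵢ` is the contraction of the `i`-th relation with `v ∧ w`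
  · linear_combination -2 * c * (w 0 1 * hv1 - v 0 1 * hw1)
      + (2 * m - k) * (w 0 1 * hv2 - v 0 1 * hw2)
      + c * (w 1 1 * hv2 - v 1 1 * hw2)
      + c * (w 0 0 * hv3 - v 0 0 * hw3)
      - m * (w 0 0 * hv4 - v 0 0 * hw4)
  · linear_combination -(v 0 0 * w 1 0 - v 1 0 * w 0 0) * hR
      - m * (w 0 0 * hv1 - v 0 0 * hw1)
      + a' * (w 0 1 * hv1 - v 0 1 * hw1)
      - c * (w 1 0 * hv1 - v 1 0 * hw1)
      + 2 * a * (w 0 0 * hv2 - v 0 0 * hw2)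
      + (m - k) * (w 1 0 * hv2 - v 1 0 * hw2)
  · linear_combination
      -(2 * (v 0 0 * w 1 1 - v 1 1 * w 0 0) + (v 0 1 * w 1 0 - v 1 0 * w 0 1)) * hR
      - 2 * c' * (w 0 0 * hv1 - v 0 0 * hw1)
      - 2 * c * (w 1 1 * hv1 - v 1 1 * hw1)
      - a * (w 0 1 * hv2 - v 0 1 * hw2)
      - c' * (w 1 0 * hv2 - v 1 0 * hw2)
      + m * (w 1 1 * hv2 - v 1 1 * hw2)
      + (m + k) * (w 0 0 * hv3 - v 0 0 * hw3)
  · linear_combination (v 0 0 * w 1 1 - v 1 1 * w 0 0) * hR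
      + c' * (w 0 0 * hv1 - v 0 0 * hw1)
      + (2 * k - m) * (w 0 1 * hv1 - v 0 1 * hw1)
      - c * (w 1 1 * hv1 - v 1 1 * hw1)
      + 4 * a * (w 0 1 * hv2 - v 0 1 * hw2)
      + (m - k) * (w 1 1 * hv2 - v 1 1 * hw2)
      - (m + k) * (w 0 0 * hv3 - v 0 0 * hw3)
  · linear_combination -4 * (v 0 1 * w 1 1 - v 1 1 * w 0 1) * hR
      - 2 * c' * (w 0 1 * hv1 - v 0 1 * hw1)
      - c' * (w 1 1 * hv2 - v 1 1 * hw2)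
      - c' * (w 0 0 * hv3 - v 0 0 * hw3)
      + (2 * m + k) * (w 0 1 * hv3 - v 0 1 * hw3)
      + m * (w 1 1 * hv4 - v 1 1 * hw4)
  · linear_combination -2 * (v 1 0 * w 1 1 - v 1 1 * w 1 0) * hR
      - 2 * c' * (w 1 0 * hv1 - v 1 0 * hw1)
      + m * (w 1 1 * hv1 - v 1 1 * hw1)
      - a * (w 1 1 * hv2 - v 1 1 * hw2)
      - a * (w 0 0 * hv3 - v 0 0 * hw3)
      + k * (w 1 0 * hv3 - v 1 0 * hw3)

end Plucker

theorem neg_det_gram_eq_discrim_of_coprime {a c a' c' m k : ℤ}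
    (hD : (m - k) ^ 2 - 4 * a * c ≠ 0) (hR : a * c + m * k = a' * c')
    (hcop : Nat.gcd (content a (m - k) c) (content a' (m + k) c') = 1)
    {M : Submodule ℤ (Matrix (Fin 2) (Fin 2) ℤ)}
    (hM : (M : Set (Matrix (Fin 2) (Fin 2) ℤ)) =
      LambdaSet (formMatrix a (m - k) c) (formMatrix a' (m + k) c'))
    (b : Module.Basis (Fin 2) ℤ M) :
    -(Matrix.of fun i j => detBil (b i) (b j)).det = (m - k) ^ 2 - 4 * a * c := by
  have hmem (i : Fin 2) : (b i : Matrix (Fin 2) (Fin 2) ℤ) ∈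
      LambdaSet (formMatrix a (m - k) c) (formMatrix a' (m + k) c') := hM ▸ (b i).prop
  have hsat (r : ℤ) (X : Matrix (Fin 2) (Fin 2) ℤ) (hr : r ≠ 0) (hX : r • X ∈ M) : X ∈ M := by
    rwa [← SetLike.mem_coe, hM, ← smul_mem_lambdaSet_iff hr, ← hM]
  obtain ⟨e, he⟩ := exists_sum_mul_eq_one_of_coprime_content hcop
  obtain ⟨σ, hσ⟩ := exists_smul_plucker_eq_smul hR (hmem 0) (hmem 1)
  have ht := eq_sum_mul_smul_of_smul_eq_smul he hD hσ
  set t := ∑ i, e i * plucker (b 0) (b 1) i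
  have ht_unit : IsUnit t := by
    by_contra hu
    obtain ⟨ρ, hρ, hρt⟩ := Int.exists_prime_and_dvd (mt Int.isUnit_iff_natAbs_eq.mpr hu)
    exact not_forall_prime_dvd_plucker hsat b hρ fun i => ht ▸ dvd_mul_of_dvd_left hρt _
  rw [neg_det_gram_detBil_eq_pluckerForm, ht]
  simp only [pluckerForm, Fin.isValue, Pi.smul_apply, smul_eq_mul, cons_val, cons_val_zero,
    cons_val_one]
  linear_combination (m ^ 2 + k ^ 2 - 2 * a * c - 2 * a' * c') * Int.isUnit_sq ht_unit + 2 * hR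

theorem stmt16_general (a b c a' b' c' : ℤ) (hP : b ^ 2 - 4 * a * c ≠ 0)
    (hsame : b ^ 2 - 4 * a * c = b' ^ 2 - 4 * a' * c') :
    ∀ bas : Module.Basis (Fin 2) ℤ
        ↥(Submodule.span ℤ (LambdaSet (formMatrix a b c) (formMatrix a' b' c'))),
      -(Matrix.det (Matrix.of fun i j => detBil ↑(bas i) ↑(bas j))) =
        (b ^ 2 - 4 * a * c) /
          ((Nat.gcd (content a b c) (content a' b' c') : ℤ)) ^ 2 := by
  intro bas
  generalize hl : Nat.gcd (content a b c) (content a' b' c') = l at bas ⊢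
  obtain ⟨A, B, C, rfl, rfl, rfl⟩ := exists_eq_mul_of_dvd_content (hl ▸ Nat.gcd_dvd_left _ _)
  obtain ⟨A', B', C', rfl, rfl, rfl⟩ := exists_eq_mul_of_dvd_content (hl ▸ Nat.gcd_dvd_right _ _)
  have hl0 : (l : ℤ) ≠ 0 := by rintro h; apply hP; rw [h]; ring
  have hdiscrim (A B C : ℤ) :
      (l * B) ^ 2 - 4 * (l * A) * (l * C) = l ^ 2 * (B ^ 2 - 4 * A * C) := by ring
  rw [hdiscrim, hdiscrim, mul_right_inj' (pow_ne_zero 2 hl0)] at hsame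
  rw [hdiscrim] at hP ⊢
  rw [Int.mul_ediv_cancel_left _ (pow_ne_zero 2 hl0)]
  obtain ⟨m, k, rfl, rfl⟩ := exists_eq_sub_add_of_discrim_eq hsame
  rw [content_mul, content_mul, Int.natAbs_natCast, Nat.gcd_mul_left,
    Nat.mul_eq_left (by exact_mod_cast hl0)] at hl
  refine neg_det_gram_eq_discrim_of_coprime (right_ne_zero_of_mul hP) (by linarith) hl ?_ bas
  rw [coe_span_lambdaSet, formMatrix_mul, formMatrix_mul, lambdaSet_smul hl0]

/-- For non-degenerate binary forms `P = [a,b,c]`, `Q = [a',b',c']` of the same discriminant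
`D`, with contents `δ`, `δ'` and `λ = gcd(δ,δ')`, the rank-2 lattice `Λ(P,Q)` has
discriminant `D/λ²`.  (The discriminant of a rank-2 even lattice with Gram matrix
`[[2α,β],[β,2γ]]` is `β² - 4αγ = -det`.) -/
theorem stmt16 (a b c a' b' c' : ℤ) (hP : b ^ 2 - 4 * a * c ≠ 0)
    (hQ : b' ^ 2 - 4 * a' * c' ≠ 0)
    (hsame : b ^ 2 - 4 * a * c = b' ^ 2 - 4 * a' * c') :
    ∀ bas : Module.Basis (Fin 2) ℤ
        ↥(Submodule.span ℤ (LambdaSet (formMatrix a b c) (formMatrix a' b' c'))),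
      -(Matrix.det (Matrix.of fun i j => detBil ↑(bas i) ↑(bas j))) =
        (b ^ 2 - 4 * a * c) /
          ((Nat.gcd (content a b c) (content a' b' c') : ℤ)) ^ 2 :=
  stmt16_general a b c a' b' c' hP hsame
end
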